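/- arXiv:2605.29042 — 2 statements merged into one kernel-verified Lean document; each statement's English description precedes it below -/
import Mathlib

section
/- For any two vectors x, y in R^n, the softmax function satisfies ||softmax(x) - softmax(y)||_1 ≤ 2 ||x - y||_∞. -/
open Finset

/-- softmax(x)_z = exp(x_z) / Σ_{z'} exp(x_{z'}) -/
noncomputable def softmax {Z : Type*} [Fintype Z] (x : Z → ℝ) : Z → ℝ :=
  fun z => Real.exp (x z) / ∑ z', Real.exp (x z')

private lemma softmax_exp_le {Z : Type*} [Fintype Z] [Nonempty Z] (x y : Z → ℝ) (M : ℝ)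
    (h : ∀ z, |x z - y z| ≤ M) (z : Z) :
    softmax x z ≤ Real.exp (2 * M) * softmax y z := by
  have hSy : (0:ℝ) < ∑ z', Real.exp (y z') :=
    Finset.sum_pos (fun i _ => Real.exp_pos _) Finset.univ_nonempty
  have h1 : Real.exp (x z) ≤ Real.exp M * Real.exp (y z) := by
    rw [← Real.exp_add]
    apply Real.exp_le_exp.2
    have := abs_le.1 (h z)
    linarith [this.2]
  have h2 : Real.exp (-M) * (∑ z', Real.exp (y z')) ≤ ∑ z', Real.exp (x z') := by
    rw [Finset.mul_sum]
    apply Finset.sum_le_sum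
    intro i _
    rw [← Real.exp_add]
    apply Real.exp_le_exp.2
    have := abs_le.1 (h i)
    linarith [this.1]
  have hden : (0:ℝ) < Real.exp (-M) * (∑ z', Real.exp (y z')) :=
    mul_pos (Real.exp_pos _) hSy
  have := div_le_div₀ (by positivity) h1 hden h2
  calc softmax x z ≤ Real.exp M * Real.exp (y z) / (Real.exp (-M) * ∑ z', Real.exp (y z')) := this
    _ = Real.exp (2 * M) * softmax y z := by
        rw [softmax, Real.exp_neg, two_mul, Real.exp_add]
        field_simp

private lemma key_exp_ineq (t : ℝ) (ht : 0 ≤ t) :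
    2 * (Real.exp t - 1) ≤ t * (Real.exp t + 1) := by
  set g : ℝ → ℝ := fun s => s * (Real.exp s + 1) - 2 * (Real.exp s - 1) with hgdef
  have hg : ∀ s, HasDerivAt g (1 + (s - 1) * Real.exp s) s := by
    intro s
    have h1 : HasDerivAt (fun s : ℝ => s * (Real.exp s + 1))
        (1 * (Real.exp s + 1) + s * Real.exp s) s :=
      (hasDerivAt_id s).mul ((Real.hasDerivAt_exp s).add_const 1)
    have h2 : HasDerivAt (fun s : ℝ => 2 * (Real.exp s - 1)) (2 * Real.exp s) s :=
      ((Real.hasDerivAt_exp s).sub_const 1).const_mul 2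
    exact (h1.sub h2).congr_deriv (by ring)
  have hderiv_nonneg : ∀ s : ℝ, 0 ≤ 1 + (s - 1) * Real.exp s := by
    intro s
    have h := Real.add_one_le_exp (-s)
    rw [Real.exp_neg] at h
    have hp := Real.exp_pos s
    have h2 : (1 - s) * Real.exp s ≤ 1 := by
      have := mul_le_mul_of_nonneg_right h hp.le
      rwa [inv_mul_cancel₀ hp.ne', show (-s + 1) = 1 - s by ring] at this
    nlinarith
  have hmono : MonotoneOn g (Set.Ici (0:ℝ)) := by
    apply monotoneOn_of_deriv_nonneg (convex_Ici 0)
    · exact (Continuous.sub (continuous_id.mul (Real.continuous_exp.add continuous_const))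
        (continuous_const.mul (Real.continuous_exp.sub continuous_const))).continuousOn
    · intro s _
      exact (hg s).differentiableAt.differentiableWithinAt
    · intro s _
      rw [(hg s).deriv]
      exact hderiv_nonneg s
  have h0 : g 0 ≤ g t := hmono Set.self_mem_Ici (Set.mem_Ici.2 ht) ht
  simp only [hgdef, Real.exp_zero] at h0
  linarith

/-- For any two vectors `x, y : Z → ℝ`,
`‖softmax x - softmax y‖₁ ≤ 2 ‖x - y‖_∞`. -/
theorem softmax_lipschitz_one_infty {Z : Type*} [Fintype Z] [Nonempty Z] (x y : Z → ℝ) :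
    ∑ z, |softmax x z - softmax y z| ≤
      2 * (Finset.univ.sup' Finset.univ_nonempty fun z => |x z - y z|) := by
  set M := Finset.univ.sup' Finset.univ_nonempty fun z => |x z - y z| with hMdef
  have hxyM : ∀ z, |x z - y z| ≤ M := fun z => Finset.le_sup' (fun w => |x w - y w|) (Finset.mem_univ z)
  have hM : 0 ≤ M := le_trans (abs_nonneg _) (hxyM (Classical.arbitrary Z))
  set p := softmax x with hp
  set q := softmax y with hq
  have hpq : ∀ z, p z ≤ Real.exp (2 * M) * q z := softmax_exp_le x y M hxyM
  have hqp : ∀ z, q z ≤ Real.exp (2 * M) * p z := by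
    intro z
    exact softmax_exp_le y x M (fun z => by rw [abs_sub_comm]; exact hxyM z) z
  have hppos : ∀ z, 0 < p z := fun z => by
    apply div_pos (Real.exp_pos _) (Finset.sum_pos (fun i _ => Real.exp_pos _) Finset.univ_nonempty)
  have hqpos : ∀ z, 0 < q z := fun z => by
    apply div_pos (Real.exp_pos _) (Finset.sum_pos (fun i _ => Real.exp_pos _) Finset.univ_nonempty)
  have hsum : ∀ w : Z → ℝ, ∑ z, softmax w z = 1 := by
    intro w
    have hS : (0:ℝ) < ∑ z', Real.exp (w z') :=
      Finset.sum_pos (fun i _ => Real.exp_pos _) Finset.univ_nonempty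
    simp only [softmax, ← Finset.sum_div]
    exact div_self hS.ne'
  have hsump : ∑ z, p z = 1 := hsum x
  have hsumq : ∑ z, q z = 1 := hsum y
  set E := Real.exp (-(2 * M)) with hEdef
  have hEpos : 0 < E := Real.exp_pos _
  have hEmul : Real.exp (2 * M) * E = 1 := by
    rw [hEdef, ← Real.exp_add]; simp
  have hE1 : E ≤ 1 := Real.exp_le_one_iff.2 (by linarith)
  -- pointwise: E * p z ≤ q z and E * q z ≤ p z
  have hEp : ∀ z, E * p z ≤ q z := by
    intro z
    have := mul_le_mul_of_nonneg_left (hpq z) hEpos.le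
    calc E * p z ≤ E * (Real.exp (2 * M) * q z) := this
      _ = (Real.exp (2 * M) * E) * q z := by ring
      _ = q z := by rw [hEmul, one_mul]
  have hEq : ∀ z, E * q z ≤ p z := by
    intro z
    have := mul_le_mul_of_nonneg_left (hqp z) hEpos.le
    calc E * q z ≤ E * (Real.exp (2 * M) * p z) := this
      _ = (Real.exp (2 * M) * E) * p z := by ring
      _ = p z := by rw [hEmul, one_mul]
  set A := Finset.univ.filter (fun z => q z ≤ p z) with hAdef
  set B := Finset.univ.filter (fun z => ¬ q z ≤ p z) with hBdef
  set D := ∑ z ∈ A, (p z - q z) with hDdef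
  have hD0 : 0 ≤ D := Finset.sum_nonneg (fun z hz => by
    have := (Finset.mem_filter.1 hz).2; linarith)
  have hsplit : ∑ z, |p z - q z| = ∑ z ∈ A, (p z - q z) + ∑ z ∈ B, (q z - p z) := by
    rw [← Finset.sum_filter_add_sum_filter_not Finset.univ (fun z => q z ≤ p z)
      (fun z => |p z - q z|)]
    congr 1
    · exact Finset.sum_congr rfl (fun z hz => abs_of_nonneg (by
        have := (Finset.mem_filter.1 hz).2; linarith))
    · exact Finset.sum_congr rfl (fun z hz => by
        have := (Finset.mem_filter.1 hz).2
        rw [abs_of_neg (by push_neg at this; linarith)]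
        ring)
  have htotal : ∑ z ∈ A, (p z - q z) + ∑ z ∈ B, (p z - q z) = 0 := by
    rw [Finset.sum_filter_add_sum_filter_not Finset.univ (fun z => q z ≤ p z)
      (fun z => p z - q z), Finset.sum_sub_distrib, hsump, hsumq]
    ring
  have hB_eq : ∑ z ∈ B, (q z - p z) = D := by
    have : ∑ z ∈ B, (q z - p z) = - ∑ z ∈ B, (p z - q z) := by
      rw [← Finset.sum_neg_distrib]; exact Finset.sum_congr rfl (fun z _ => by ring)
    rw [this]; linarith [htotal]
  -- the two key bounds
  have hbound1 : D ≤ (1 - E) * ∑ z ∈ A, p z := by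
    rw [Finset.mul_sum]
    apply Finset.sum_le_sum
    intro z _
    have := hEp z
    nlinarith
  have hbound2 : D ≤ (1 - E) * ∑ z ∈ B, q z := by
    rw [← hB_eq, Finset.mul_sum]
    apply Finset.sum_le_sum
    intro z _
    have := hEq z
    nlinarith
  have hQsplit : ∑ z ∈ A, q z + ∑ z ∈ B, q z = 1 := by
    rw [Finset.sum_filter_add_sum_filter_not Finset.univ (fun z => q z ≤ p z) q, hsumq]
  have hPA : ∑ z ∈ A, p z = ∑ z ∈ A, q z + D := by
    rw [hDdef, Finset.sum_sub_distrib]; ring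
  -- combine: 2 * D ≤ (1 - E) * (1 + D)
  have hcomb : 2 * D ≤ (1 - E) * (1 + D) := by
    have := add_le_add hbound1 hbound2
    rw [hPA] at this
    nlinarith [hQsplit]
  have hkey := key_exp_ineq (2 * M) (by linarith)
  have hkey2 : 2 * (1 - E) ≤ (2 * M) * (1 + E) := by
    have := mul_le_mul_of_nonneg_right hkey hEpos.le
    nlinarith [hEmul]
  rw [hsplit, hB_eq, ← hDdef]
  -- goal: D + D ≤ 2 * M
  have h1 : D * (1 + E) ≤ 1 - E := by nlinarith
  have h2 : 2 * D * (1 + E) ≤ 2 * M * (1 + E) := by nlinarith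
  nlinarith [hEpos]
end

section
/- (k-step belief error bound) Let b_{t+k} = softmax(log b_t + Σ_{i=0}^{k-1} ℓ_{t+i}) and b̂_{t+k} = softmax(log b_t + Σ_{i=0}^{k-1} ℓ̂_{t+i}) be the true and approximate beliefs after k softmax-Bayes updates from a common initial belief b_t with positive entries. If ||ℓ̂_{t+i} - ℓ_{t+i}||_∞ ≤ ε_{t+i} for each i, then ||b̂_{t+k} - b_{t+k}||_1 ≤ 2 Σ_{i=0}^{k-1} ε_{t+i}; in particular if ε_{t+i} ≤ ε for all i then ||b̂_{t+k} - b_{t+k}||_1 ≤ 2kε. -/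
/-!
Both beliefs are softmaxes of logit vectors `x` (true) and `y` (approximate) that differ by at most
`E = ∑ i, ε (t + i)` in sup norm, the common prior `log b_t` cancelling. Since log-sum-exp is
1-Lipschitz for the sup norm, `|log (softmax y z) - log (softmax x z)| ≤ 2 E` for every `z`.
The logarithmic mean of two positive numbers is at most their arithmetic mean, i.e.
`|q - p| ≤ (p + q) / 2 * |log q - log p|`; summing this over `z` for the two probability vectors
`p = softmax x` and `q = softmax y` gives `‖q - p‖₁ ≤ 2 E`.
-/

open Finset

open Real

namespace Real

theorem two_mul_div_add_two_le_log_one_add {a : ℝ} (ha : 0 ≤ a) :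
    2 * a / (a + 2) ≤ log (1 + a) := by
  simpa [mul_div_assoc] using le_hasSum (hasSum_log_one_add ha) 0 fun _ _ => by positivity

theorem sub_le_mul_log_sub_log_of_le {p q : ℝ} (hp : 0 < p) (hpq : p ≤ q) :
    q - p ≤ (p + q) / 2 * (log q - log p) := by
  have ha : 0 ≤ q / p - 1 := by rw [sub_nonneg, one_le_div hp]; exact hpq
  have h := two_mul_div_add_two_le_log_one_add ha
  rw [add_sub_cancel, log_div (hp.trans_le hpq).ne' hp.ne'] at h
  calc q - p = (p + q) / 2 * (2 * (q / p - 1) / (q / p - 1 + 2)) := by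
        rw [show q / p - 1 + 2 = (p + q) / p by field_simp; ring, div_sub_one hp.ne']
        field_simp [(by linarith : p + q ≠ 0)]
    _ ≤ (p + q) / 2 * (log q - log p) := by gcongr; linarith

theorem abs_sub_le_mul_abs_log_sub_log {p q : ℝ} (hp : 0 < p) (hq : 0 < q) :
    |q - p| ≤ (p + q) / 2 * |log q - log p| := by
  rcases le_total p q with hpq | hqp
  · rw [abs_of_nonneg (sub_nonneg.2 hpq), abs_of_nonneg (sub_nonneg.2 (log_le_log hp hpq))]
    exact sub_le_mul_log_sub_log_of_le hp hpq
  · rw [abs_sub_comm, abs_sub_comm (log q), add_comm,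
      abs_of_nonneg (sub_nonneg.2 hqp), abs_of_nonneg (sub_nonneg.2 (log_le_log hq hqp))]
    exact sub_le_mul_log_sub_log_of_le hq hqp

end Real

section Softmax

variable {Z : Type*} [Fintype Z] [Nonempty Z]

theorem sum_exp_pos (x : Z → ℝ) : 0 < ∑ z, exp (x z) :=
  sum_pos (fun _ _ => exp_pos _) univ_nonempty

theorem softmax_pos (x : Z → ℝ) (z : Z) : 0 < softmax x z :=
  div_pos (exp_pos _) (sum_exp_pos x)

theorem sum_softmax (x : Z → ℝ) : ∑ z, softmax x z = 1 := by
  simp only [softmax, ← sum_div]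
  exact div_self (sum_exp_pos x).ne'

theorem log_softmax (x : Z → ℝ) (z : Z) :
    log (softmax x z) = x z - log (∑ z', exp (x z')) := by
  rw [softmax, log_div (exp_pos _).ne' (sum_exp_pos x).ne', log_exp]

theorem log_sum_exp_le_add_of_le_add {x y : Z → ℝ} {ε : ℝ} (h : ∀ z, y z ≤ x z + ε) :
    log (∑ z, exp (y z)) ≤ log (∑ z, exp (x z)) + ε := by
  rw [← log_exp ε, ← log_mul (sum_exp_pos x).ne' (exp_pos ε).ne', sum_mul]
  refine log_le_log (sum_exp_pos y) (sum_le_sum fun z _ => ?_)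
  rw [← exp_add]
  exact exp_le_exp.2 (h z)

theorem abs_log_sum_exp_sub_le {x y : Z → ℝ} {ε : ℝ} (h : ∀ z, |y z - x z| ≤ ε) :
    |log (∑ z, exp (y z)) - log (∑ z, exp (x z))| ≤ ε := by
  have hyx := log_sum_exp_le_add_of_le_add (x := x) (y := y) fun z => by
    linarith [(abs_le.1 (h z)).2]
  have hxy := log_sum_exp_le_add_of_le_add (x := y) (y := x) fun z => by
    linarith [(abs_le.1 (h z)).1]
  exact abs_sub_le_iff.2 ⟨by linarith, by linarith⟩

theorem sum_abs_softmax_sub_le {x y : Z → ℝ} {ε : ℝ} (h : ∀ z, |y z - x z| ≤ ε) :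
    ∑ z, |softmax y z - softmax x z| ≤ 2 * ε := by
  have hlog : ∀ z, |log (softmax y z) - log (softmax x z)| ≤ 2 * ε := fun z => by
    rw [log_softmax, log_softmax]
    calc _ = |(y z - x z) - (log (∑ z', exp (y z')) - log (∑ z', exp (x z')))| := by
          congr 1; ring
      _ ≤ |y z - x z| + |log (∑ z', exp (y z')) - log (∑ z', exp (x z'))| := abs_sub _ _
      _ ≤ 2 * ε := by linarith [h z, abs_log_sum_exp_sub_le h]
  calc ∑ z, |softmax y z - softmax x z|
      ≤ ∑ z, (softmax x z + softmax y z) / 2 * (2 * ε) := sum_le_sum fun z _ =>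
        (abs_sub_le_mul_abs_log_sub_log (softmax_pos x z) (softmax_pos y z)).trans
          (mul_le_mul_of_nonneg_left (hlog z)
            (by linarith [softmax_pos x z, softmax_pos y z]))
    _ = 2 * ε := by
      rw [← sum_mul, ← sum_div, sum_add_distrib, sum_softmax, sum_softmax]
      ring

end Softmax

theorem k_step_belief_error_general {Z : Type*} [Fintype Z] (bt : Z → ℝ)
    (ℓ ℓhat : ℕ → Z → ℝ) (ε : ℕ → ℝ) (t k : ℕ)
    (hsum : ∑ z, bt z = 1)
    (herr : ∀ i < k, ∀ z, |ℓhat (t + i) z - ℓ (t + i) z| ≤ ε (t + i)) :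
    (∑ z, |softmax (fun z => Real.log (bt z) + ∑ i ∈ Finset.range k, ℓhat (t + i) z) z -
           softmax (fun z => Real.log (bt z) + ∑ i ∈ Finset.range k, ℓ (t + i) z) z|
        ≤ 2 * ∑ i ∈ Finset.range k, ε (t + i)) ∧
    (∀ εb : ℝ, (∀ i < k, ε (t + i) ≤ εb) →
      ∑ z, |softmax (fun z => Real.log (bt z) + ∑ i ∈ Finset.range k, ℓhat (t + i) z) z -
            softmax (fun z => Real.log (bt z) + ∑ i ∈ Finset.range k, ℓ (t + i) z) z|
        ≤ 2 * k * εb) := by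
  obtain ⟨z₀, -, -⟩ := exists_ne_zero_of_sum_ne_zero (hsum ▸ one_ne_zero : ∑ z, bt z ≠ 0)
  have : Nonempty Z := ⟨z₀⟩
  have hlogits : ∀ z, |(log (bt z) + ∑ i ∈ range k, ℓhat (t + i) z) -
      (log (bt z) + ∑ i ∈ range k, ℓ (t + i) z)| ≤ ∑ i ∈ range k, ε (t + i) := fun z => by
    rw [add_sub_add_left_eq_sub, ← sum_sub_distrib]
    exact (abs_sum_le_sum_abs _ _).trans (sum_le_sum fun i hi => herr i (mem_range.1 hi) z)
  have hbound := sum_abs_softmax_sub_le hlogits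
  refine ⟨hbound, fun εb hεb => hbound.trans ?_⟩
  have hsum_le := sum_le_card_nsmul (range k) (fun i => ε (t + i)) εb
    fun i hi => hεb i (mem_range.1 hi)
  rw [card_range, nsmul_eq_mul] at hsum_le
  linarith

/-- k-step belief error bound: with
`b_{t+k} = softmax (log b_t + ∑_{i<k} ℓ_{t+i})` and
`b̂_{t+k} = softmax (log b_t + ∑_{i<k} ℓ̂_{t+i})`, if each per-step log-likelihood error is
bounded by `ε (t+i)`, then `‖b̂_{t+k} - b_{t+k}‖₁ ≤ 2 ∑_{i<k} ε (t+i)`; in particular if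
`ε (t+i) ≤ εb` for all `i < k` then it is at most `2 k εb`. -/
theorem k_step_belief_error {Z : Type*} [Fintype Z] (bt : Z → ℝ)
    (ℓ ℓhat : ℕ → Z → ℝ) (ε : ℕ → ℝ) (t k : ℕ)
    (hpos : ∀ z, 0 < bt z) (hsum : ∑ z, bt z = 1)
    (herr : ∀ i < k, ∀ z, |ℓhat (t + i) z - ℓ (t + i) z| ≤ ε (t + i)) :
    (∑ z, |softmax (fun z => Real.log (bt z) + ∑ i ∈ Finset.range k, ℓhat (t + i) z) z -
           softmax (fun z => Real.log (bt z) + ∑ i ∈ Finset.range k, ℓ (t + i) z) z|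
        ≤ 2 * ∑ i ∈ Finset.range k, ε (t + i)) ∧
    (∀ εb : ℝ, (∀ i < k, ε (t + i) ≤ εb) →
      ∑ z, |softmax (fun z => Real.log (bt z) + ∑ i ∈ Finset.range k, ℓhat (t + i) z) z -
            softmax (fun z => Real.log (bt z) + ∑ i ∈ Finset.range k, ℓ (t + i) z) z|
        ≤ 2 * k * εb) :=
  k_step_belief_error_general bt ℓ ℓhat ε t k hsum herr
end
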